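/- Let G be the Artin group on generators u, u_1 with the single relation (uu_1)^{k} = (u_1 u)^{k} (i.e., the dihedral Artin group with label 2k, k ≥ 2), and let χ : G → ℝ be the homomorphism with χ(u) = 1, χ(u_1) = −1. Then N = ker χ is generated by the conjugates x_j = u^j (u u_1) u^{−j}, j ∈ ℤ. -/

import Mathlib

/-- The single relation `(u u₁)^k (u₁ u)^{-k}` of the dihedral Artin group with label `2k`,
where `u` is `of false` and `u₁` is `of true`. -/
def dihedralArtinRels (k : ℕ) : Set (FreeGroup Bool) :=
  {(FreeGroup.of false * FreeGroup.of true) ^ k *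
    ((FreeGroup.of true * FreeGroup.of false) ^ k)⁻¹}

/-! Let `H` be the subgroup generated by the `u ^ j * (u * u₁) * u ^ (-j)`. Conjugation by `u`
shifts `j`, and `u * u₁ ∈ H`, so both `u` and `u₁ = u⁻¹ * (u * u₁)` normalize `H`; as they generate
the group, `H` is normal and every element is `h * u ^ n` with `h ∈ H`. Now `χ` kills `H` and
`χ u` has infinite order, so such an element lies in `ker χ` only if `n = 0`. -/

namespace Subgroup

variable {G : Type*} [Group G]

def zpowConjClosure (u g : G) : Subgroup G :=
  closure {x | ∃ j : ℤ, x = u ^ j * g * u ^ (-j)}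

theorem mem_zpowConjClosure_self (u g : G) : g ∈ zpowConjClosure u g :=
  subset_closure ⟨0, by simp⟩

theorem zpow_conj_mem_zpowConjClosure {u g x : G} (n : ℤ) (hx : x ∈ zpowConjClosure u g) :
    u ^ n * x * u ^ (-n) ∈ zpowConjClosure u g := by
  suffices zpowConjClosure u g ≤ (zpowConjClosure u g).comap (MulAut.conj (u ^ n)).toMonoidHom by
    simpa only [mem_comap, MulEquiv.coe_toMonoidHom, MulAut.conj_apply, zpow_neg] using this hx
  refine closure_le _ |>.2 ?_
  rintro _ ⟨j, rfl⟩
  refine subset_closure ⟨n + j, ?_⟩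
  simp only [MulEquiv.coe_toMonoidHom, MulAut.conj_apply]
  group

theorem mem_normalizer_zpowConjClosure (u g : G) :
    u ∈ normalizer (zpowConjClosure u g : Set G) := by
  refine mem_normalizer_iff.2 fun x => ⟨fun hx => ?_, fun hx => ?_⟩
  · simpa using zpow_conj_mem_zpowConjClosure 1 hx
  · simpa [mul_assoc] using zpow_conj_mem_zpowConjClosure (-1) hx

theorem zpowConjClosure_normal {u v : G} (hG : closure {u, v} = ⊤) :
    (zpowConjClosure u (u * v)).Normal := by
  have hv : v ∈ normalizer (zpowConjClosure u (u * v) : Set G) := by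
    simpa using mul_mem (inv_mem (mem_normalizer_zpowConjClosure u (u * v)))
      (le_normalizer (mem_zpowConjClosure_self u (u * v)))
  rw [← normalizer_eq_top_iff, eq_top_iff, ← hG, closure_le, Set.pair_subset_iff]
  exact ⟨mem_normalizer_zpowConjClosure u (u * v), hv⟩

theorem exists_mem_zpowConjClosure_mul_zpow {u v : G} (hG : closure {u, v} = ⊤) (x : G) :
    ∃ y ∈ zpowConjClosure u (u * v), ∃ n : ℤ, y * u ^ n = x := by
  have := zpowConjClosure_normal hG
  have hsup : zpowConjClosure u (u * v) ⊔ zpowers u = ⊤ := by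
    rw [eq_top_iff, ← hG, closure_le, Set.pair_subset_iff]
    refine ⟨mem_sup_right (mem_zpowers u), ?_⟩
    simpa using mul_mem (mem_sup_right (inv_mem (mem_zpowers u)))
      (mem_sup_left (mem_zpowConjClosure_self u (u * v)))
  obtain ⟨y, hy, _, ⟨n, rfl⟩, rfl⟩ := mem_sup_of_normal_left.1 (hsup ▸ mem_top x)
  exact ⟨y, hy, n, rfl⟩

end Subgroup

theorem MonoidHom.ker_eq_zpowConjClosure {G M : Type*} [Group G] [Group M] {u v : G}
    (hG : Subgroup.closure {u, v} = ⊤) (χ : G →* M) (huv : χ (u * v) = 1)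
    (hu : ¬IsOfFinOrder (χ u)) :
    χ.ker = Subgroup.zpowConjClosure u (u * v) := by
  have hle : Subgroup.zpowConjClosure u (u * v) ≤ χ.ker := by
    refine Subgroup.closure_le _ |>.2 ?_
    rintro _ ⟨j, rfl⟩
    simp [huv]
  refine le_antisymm (fun x hx => ?_) hle
  obtain ⟨y, hy, n, rfl⟩ := Subgroup.exists_mem_zpowConjClosure_mul_zpow hG x
  have hn : χ u ^ n = 1 := by
    rwa [mem_ker, map_mul, mem_ker.1 (hle hy), one_mul, map_zpow] at hx
  obtain rfl : n = 0 := by_contra fun hn0 => hu (isOfFinOrder_iff_zpow_eq_one.2 ⟨n, hn0, hn⟩)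
  simpa using hy

theorem kernel_generated_by_conjugates_general (k : ℕ)
    (χ : PresentedGroup (dihedralArtinRels k) →* Multiplicative ℝ)
    (hu : χ (PresentedGroup.of false) = Multiplicative.ofAdd (1 : ℝ))
    (hu1 : χ (PresentedGroup.of true) = Multiplicative.ofAdd (-1 : ℝ)) :
    χ.ker = Subgroup.closure
      {g : PresentedGroup (dihedralArtinRels k) | ∃ j : ℤ,
        g = (PresentedGroup.of false) ^ j *
            (PresentedGroup.of false * PresentedGroup.of true) *
            (PresentedGroup.of false) ^ (-j)} := by
  have hG : Subgroup.closure {PresentedGroup.of false, PresentedGroup.of true} =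
      (⊤ : Subgroup (PresentedGroup (dihedralArtinRels k))) :=
    eq_top_iff.2 fun x _ => PresentedGroup.generated_by _ _
      (by rintro (_ | _) <;> exact Subgroup.subset_closure (by simp)) x
  refine χ.ker_eq_zpowConjClosure hG (by simp [hu, hu1]) ?_
  rw [hu, isOfFinOrder_iff_zpow_eq_one]
  rintro ⟨n, hn, h⟩
  exact hn (by simpa using congrArg Multiplicative.toAdd h)

theorem kernel_generated_by_conjugates (k : ℕ) (hk : 2 ≤ k)
    (χ : PresentedGroup (dihedralArtinRels k) →* Multiplicative ℝ)
    (hu : χ (PresentedGroup.of false) = Multiplicative.ofAdd (1 : ℝ))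
    (hu1 : χ (PresentedGroup.of true) = Multiplicative.ofAdd (-1 : ℝ)) :
    χ.ker = Subgroup.closure
      {g : PresentedGroup (dihedralArtinRels k) | ∃ j : ℤ,
        g = (PresentedGroup.of false) ^ j *
            (PresentedGroup.of false * PresentedGroup.of true) *
            (PresentedGroup.of false) ^ (-j)} :=
  kernel_generated_by_conjugates_general k χ hu hu1
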